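/- Define H(u) = 2 Σ_{n≥1} (2n²u² − 1) e^{−n²u²} for u > 0. Then for all λ, z > 0, (1/(2√π)) ∫₀^∞ e^{−λr} r^{−3/2} H( z/√r ) dr = √λ coth(z√λ) − √λ. -/

import Mathlib

/-- The series expression `H(u) = 2 Σ_{n≥1} (2n²u² - 1) e^{-n²u²}` for the tail probability
`N_nr(Γ > u)` of the total height of the Brownian tree. -/
noncomputable def brownianTreeHeightTail (u : ℝ) : ℝ :=
  2 * ∑' n : ℕ, (2 * ((n : ℝ) + 1) ^ 2 * u ^ 2 - 1) *
    Real.exp (-(((n : ℝ) + 1) ^ 2 * u ^ 2))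

/-!
Expanding `H` termwise, the `n`-th summand of the integrand is
`2 (2c/r - 1) r^{-3/2} e^{-λr - c/r}` with `c = (n+1)² z²`, and its integral is
`4 √π √λ e^{-2√(λc)}`. The substitution `x = √λ √r - √c / √r` turns
`∫ (√λ r^{-1/2} + √c r^{-3/2}) e^{-λr - c/r} dr` into the Gaussian integral, the involution
`r ↦ c / (λ r)` relates the `r^{-1/2}` and `r^{-3/2}` moments, and the `r^{-5/2}` moment is
eliminated by differentiating `r^{-1/2} e^{-λr - c/r}`. These integrals decay geometrically in
`n`, which justifies exchanging sum and integral, and `Σ_{n≥0} 2 e^{-2(n+1)y} = coth y - 1`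
with `y = z√λ`.
-/

open MeasureTheory Set Real Filter Topology

noncomputable def expKernel (b c r : ℝ) : ℝ := exp (-(b * r + c / r))

section
variable {b c r : ℝ}

lemma rpow_mul_expKernel_pos (s : ℝ) (hr : 0 < r) : 0 < r ^ s * expKernel b c r :=
  mul_pos (rpow_pos_of_pos hr s) (exp_pos _)

lemma exp_neg_div_le (hc : 0 < c) (hr : 0 < r) : exp (-(c / r)) ≤ 6 * r ^ 3 / c ^ 3 := by
  have h : (c / r) ^ 3 / 6 ≤ exp (c / r) := by
    simpa [Nat.factorial] using pow_div_factorial_le_exp _ (div_pos hc hr).le 3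
  rw [exp_neg, inv_le_comm₀ (exp_pos _) (by positivity)]
  calc (6 * r ^ 3 / c ^ 3)⁻¹ = (c / r) ^ 3 / 6 := by field_simp
    _ ≤ exp (c / r) := h

lemma rpow_mul_expKernel_le (s : ℝ) (hc : 0 < c) (hr : 0 < r) :
    r ^ s * expKernel b c r ≤ 6 / c ^ 3 * (r ^ (s + 3) * exp (-b * r)) := by
  have hsplit : expKernel b c r = exp (-(c / r)) * exp (-b * r) := by
    rw [expKernel, ← exp_add]; ring_nf
  calc r ^ s * expKernel b c r ≤ r ^ s * (6 * r ^ 3 / c ^ 3 * exp (-b * r)) := by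
        rw [hsplit]; gcongr; exact exp_neg_div_le hc hr
    _ = 6 / c ^ 3 * (r ^ (s + 3) * exp (-b * r)) := by
        rw [rpow_add hr, rpow_ofNat]; ring

lemma continuousOn_rpow_mul_expKernel (b c s : ℝ) :
    ContinuousOn (fun r => r ^ s * expKernel b c r) (Ioi 0) := by
  unfold expKernel
  fun_prop (disch := exact fun _ hx => ne_of_gt hx)

lemma integrableOn_rpow_mul_expKernel (hb : 0 < b) (hc : 0 < c) {s : ℝ} (hs : -4 < s) :
    IntegrableOn (fun r => r ^ s * expKernel b c r) (Ioi 0) := by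
  have hdom : IntegrableOn (fun r => r ^ (s + 3) * exp (-b * r)) (Ioi 0) := by
    simpa using integrableOn_rpow_mul_exp_neg_mul_rpow (by linarith) one_pos hb
  refine (hdom.const_mul (6 / c ^ 3)).mono'
    ((continuousOn_rpow_mul_expKernel b c s).aestronglyMeasurable measurableSet_Ioi) ?_
  filter_upwards [ae_restrict_mem measurableSet_Ioi] with r (hr : 0 < r)
  rw [norm_of_nonneg (rpow_mul_expKernel_pos s hr).le]
  exact rpow_mul_expKernel_le s hc hr

lemma tendsto_rpow_mul_expKernel_atTop (hb : 0 < b) (hc : 0 < c) (s : ℝ) :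
    Tendsto (fun r => r ^ s * expKernel b c r) atTop (𝓝 0) := by
  have hdom := (tendsto_rpow_mul_exp_neg_mul_atTop_nhds_zero (s + 3) b hb).const_mul (6 / c ^ 3)
  rw [mul_zero] at hdom
  refine squeeze_zero' ?_ ?_ hdom
  · filter_upwards [eventually_gt_atTop 0] with r hr using (rpow_mul_expKernel_pos s hr).le
  · filter_upwards [eventually_gt_atTop 0] with r hr using rpow_mul_expKernel_le s hc hr

lemma tendsto_rpow_mul_expKernel_nhdsGT_zero (hc : 0 < c) {s : ℝ} (hs : -3 < s) :
    Tendsto (fun r => r ^ s * expKernel b c r) (𝓝[>] 0) (𝓝 0) := by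
  have hdom : Tendsto (fun r : ℝ => 6 / c ^ 3 * (r ^ (s + 3) * exp (-b * r))) (𝓝[>] 0) (𝓝 0) := by
    have : ContinuousAt (fun r : ℝ => 6 / c ^ 3 * (r ^ (s + 3) * exp (-b * r))) 0 := by
      fun_prop (disch := right; linarith)
    simpa [zero_rpow (by linarith : s + 3 ≠ 0)] using this.tendsto.mono_left nhdsWithin_le_nhds
  refine squeeze_zero' ?_ ?_ hdom
  · filter_upwards [self_mem_nhdsWithin] with r hr using (rpow_mul_expKernel_pos s hr).le
  · filter_upwards [self_mem_nhdsWithin] with r hr using rpow_mul_expKernel_le s hc hr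


lemma rpow_neg_one_half_eq (hr : 0 ≤ r) : r ^ (-(1:ℝ)/2) = (√r)⁻¹ := by
  rw [sqrt_eq_rpow, ← rpow_neg hr]; norm_num

lemma rpow_neg_three_half_eq (hr : 0 ≤ r) : r ^ (-(3:ℝ)/2) = (√r ^ 3)⁻¹ := by
  rw [sqrt_eq_rpow, ← rpow_natCast, ← rpow_mul hr, ← rpow_neg hr]; norm_num

lemma hasDerivAt_mul_sqrt_sub_div_sqrt (a d : ℝ) (hr : 0 < r) :
    HasDerivAt (fun r => a * √r - d / √r) ((a * r ^ (-(1:ℝ)/2) + d * r ^ (-(3:ℝ)/2)) / 2) r := by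
  have hsqrt := hasDerivAt_sqrt hr.ne'
  refine ((hsqrt.const_mul a).sub ((hasDerivAt_const r d).div hsqrt
    (sqrt_pos.2 hr).ne')).congr_deriv ?_
  rw [rpow_neg_one_half_eq hr.le, rpow_neg_three_half_eq hr.le]
  field_simp
  ring

lemma strictMonoOn_mul_sqrt_sub_div_sqrt {a d : ℝ} (ha : 0 < a) (hd : 0 ≤ d) :
    StrictMonoOn (fun r => a * √r - d / √r) (Ioi 0) := fun r (hr : 0 < r) r' _ hlt => by
  have hlt' := sqrt_lt_sqrt hr.le hlt
  have := div_le_div_of_nonneg_left hd (sqrt_pos.2 hr) hlt'.le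
  have := mul_lt_mul_of_pos_left hlt' ha
  linarith

lemma image_mul_sqrt_sub_div_sqrt_Ioi {a d : ℝ} (ha : 0 < a) (hd : 0 < d) :
    (fun r => a * √r - d / √r) '' Ioi 0 = univ := by
  refine eq_univ_of_forall fun y => ?_
  set D := √(y ^ 2 + 4 * (a * d))
  have hD : D ^ 2 = y ^ 2 + 4 * (a * d) := sq_sqrt (by positivity)
  have hyD : |y| < D := by
    rw [← sqrt_sq_eq_abs]
    exact sqrt_lt_sqrt (sq_nonneg y) (by linarith [mul_pos ha hd])
  have hyD0 : 0 < y + D := by linarith [neg_abs_le y]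
  -- `√r` is the positive root of `a x² - y x - d`
  have hs : 0 < (y + D) / (2 * a) := by positivity
  refine ⟨((y + D) / (2 * a)) ^ 2, pow_pos hs 2, ?_⟩
  simp only [sqrt_sq hs.le]
  field_simp
  linear_combination hD

lemma mul_sqrt_sub_div_sqrt_sq (a d : ℝ) (hr : 0 < r) :
    (a * √r - d / √r) ^ 2 = a ^ 2 * r + d ^ 2 / r - 2 * (a * d) := by
  obtain ⟨s, hs, rfl⟩ : ∃ s > 0, r = s ^ 2 := ⟨√r, sqrt_pos.2 hr, (sq_sqrt hr.le).symm⟩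
  rw [sqrt_sq hs.le]
  field_simp
  ring

lemma integral_expKernel_gaussian (hb : 0 < b) (hc : 0 < c) :
    ∫ r in Ioi 0, (√b * r ^ (-(1:ℝ)/2) + √c * r ^ (-(3:ℝ)/2)) * expKernel b c r
      = 2 * √π * exp (-2 * (√b * √c)) := by
  have hsb := sqrt_pos.2 hb
  have hsc := sqrt_pos.2 hc
  have hcov := integral_image_eq_integral_abs_deriv_smul measurableSet_Ioi
    (fun r hr => (hasDerivAt_mul_sqrt_sub_div_sqrt √b √c hr).hasDerivWithinAt)
    (strictMonoOn_mul_sqrt_sub_div_sqrt hsb hsc.le).injOn (fun x => exp (-x ^ 2))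
  have hgauss : ∫ x, exp (-x ^ 2) = √π := by simpa using integral_gaussian 1
  have hintegrand : ∀ r ∈ Ioi (0:ℝ),
      |(√b * r ^ (-(1:ℝ)/2) + √c * r ^ (-(3:ℝ)/2)) / 2| • exp (-(√b * √r - √c / √r) ^ 2)
        = exp (2 * (√b * √c)) / 2
          * ((√b * r ^ (-(1:ℝ)/2) + √c * r ^ (-(3:ℝ)/2)) * expKernel b c r) := by
    intro r (hr : 0 < r)
    rw [abs_of_pos (by positivity), smul_eq_mul, mul_sqrt_sub_div_sqrt_sq _ _ hr,
      sq_sqrt hb.le, sq_sqrt hc.le, expKernel, neg_sub', sub_neg_eq_add, exp_add]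
    ring
  rw [image_mul_sqrt_sub_div_sqrt_Ioi hsb hsc, setIntegral_univ, hgauss,
    setIntegral_congr_fun measurableSet_Ioi hintegrand, integral_const_mul] at hcov
  rw [neg_mul, exp_neg, hcov]
  field_simp

lemma expKernel_div (hb : b ≠ 0) (hc : c ≠ 0) (r : ℝ) :
    expKernel b c (c / (b * r)) = expKernel b c r := by
  unfold expKernel
  field_simp
  ring_nf

lemma integral_rpow_neg_one_half_mul_expKernel_eq_mul_integral (hb : 0 < b) (hc : 0 < c) :
    ∫ r in Ioi 0, r ^ (-(1:ℝ)/2) * expKernel b c r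
      = √c / √b * ∫ r in Ioi 0, r ^ (-(3:ℝ)/2) * expKernel b c r := by
  set φ : ℝ → ℝ := fun r => c / (b * r)
  have hderiv : ∀ r ∈ Ioi (0:ℝ), HasDerivAt φ (-(c / (b * r ^ 2))) r := by
    intro r (hr : 0 < r)
    refine ((hasDerivAt_id' r).const_mul b |>.inv (by positivity) |>.const_mul c).congr_deriv ?_
    field_simp
  have hinvol : LeftInvOn φ φ (Ioi 0) := fun r (hr : 0 < r) => by
    simp only [φ]; field_simp
  have hmaps : MapsTo φ (Ioi 0) (Ioi 0) := fun r (hr : 0 < r) => by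
    simp only [φ, mem_Ioi]; positivity
  have himage : φ '' Ioi 0 = Ioi 0 := (hinvol.surjOn hmaps).image_eq_of_mapsTo hmaps
  have hcov := integral_image_eq_integral_abs_deriv_smul measurableSet_Ioi
    (fun r hr => (hderiv r hr).hasDerivWithinAt) hinvol.injOn
    (fun r => r ^ (-(1:ℝ)/2) * expKernel b c r)
  rw [himage] at hcov
  rw [hcov, ← integral_const_mul]
  refine setIntegral_congr_fun measurableSet_Ioi fun r (hr : 0 < r) => ?_
  obtain ⟨s, hs, rfl⟩ : ∃ s > 0, r = s ^ 2 := ⟨√r, sqrt_pos.2 hr, (sq_sqrt hr.le).symm⟩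
  have hsb := sqrt_pos.2 hb
  have hsc := sqrt_pos.2 hc
  simp only [φ, smul_eq_mul]
  rw [expKernel_div hb.ne' hc.ne', abs_neg, abs_of_pos (by positivity),
    rpow_neg_one_half_eq (by positivity), rpow_neg_three_half_eq (by positivity),
    sqrt_div' _ (by positivity), sqrt_mul hb.le, sqrt_sq hs.le]
  field_simp
  rw [sq_sqrt hb.le, sq_sqrt hc.le]
  ring

lemma integral_rpow_neg_three_half_mul_expKernel (hb : 0 < b) (hc : 0 < c) :
    ∫ r in Ioi 0, r ^ (-(3:ℝ)/2) * expKernel b c r = √π / √c * exp (-2 * (√b * √c)) := by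
  have hsb := sqrt_pos.2 hb
  have hsc := sqrt_pos.2 hc
  have hK := integral_expKernel_gaussian hb hc
  simp only [add_mul, mul_assoc] at hK
  rw [integral_add ((integrableOn_rpow_mul_expKernel hb hc (by norm_num)).const_mul _)
      ((integrableOn_rpow_mul_expKernel hb hc (by norm_num)).const_mul _),
    integral_const_mul, integral_const_mul,
    integral_rpow_neg_one_half_mul_expKernel_eq_mul_integral hb hc]
    at hK
  field_simp at hK ⊢
  linarith

lemma integral_rpow_neg_one_half_mul_expKernel (hb : 0 < b) (hc : 0 < c) :
    ∫ r in Ioi 0, r ^ (-(1:ℝ)/2) * expKernel b c r = √π / √b * exp (-2 * (√b * √c)) := by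
  have hsc := sqrt_pos.2 hc
  rw [integral_rpow_neg_one_half_mul_expKernel_eq_mul_integral hb hc,
    integral_rpow_neg_three_half_mul_expKernel hb hc]
  field_simp

lemma hasDerivAt_expKernel (hr : r ≠ 0) :
    HasDerivAt (expKernel b c) (expKernel b c r * (c / r ^ 2 - b)) r := by
  have h : HasDerivAt (fun x => -(b * x + c / x)) (c / r ^ 2 - b) r := by
    refine (((hasDerivAt_id' r).const_mul b).add
      ((hasDerivAt_const r c).div (hasDerivAt_id' r) hr)).neg.congr_deriv ?_
    field_simp
    ring
  exact h.exp

noncomputable def heightTerm (b c r : ℝ) : ℝ :=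
  2 * (2 * (c / r) - 1) * r ^ (-(3:ℝ)/2) * expKernel b c r

lemma heightTerm_eq (hr : 0 < r) :
    heightTerm b c r
      = 4 * c * (r ^ (-(5:ℝ)/2) * expKernel b c r) - 2 * (r ^ (-(3:ℝ)/2) * expKernel b c r) := by
  have h : r ^ (-(5:ℝ)/2) = r ^ (-(3:ℝ)/2) / r := by rw [← rpow_sub_one hr.ne']; norm_num
  rw [heightTerm, h]
  field_simp
  ring

lemma integrableOn_heightTerm (hb : 0 < b) (hc : 0 < c) : IntegrableOn (heightTerm b c) (Ioi 0) :=
  IntegrableOn.congr_fun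
    (((integrableOn_rpow_mul_expKernel hb hc (s := -(5:ℝ)/2) (by norm_num)).const_mul (4 * c)).sub
      ((integrableOn_rpow_mul_expKernel hb hc (s := -(3:ℝ)/2) (by norm_num)).const_mul 2))
    (fun _ hr => (heightTerm_eq hr).symm) measurableSet_Ioi

lemma hasDerivAt_rpow_neg_one_half_mul_expKernel (hr : 0 < r) :
    HasDerivAt (fun r => r ^ (-(1:ℝ)/2) * expKernel b c r)
      (heightTerm b c r / 4 - b * (r ^ (-(1:ℝ)/2) * expKernel b c r)) r := by
  refine ((hasDerivAt_rpow_const (Or.inl hr.ne')).mul (hasDerivAt_expKernel hr.ne')).congr_deriv ?_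
  have h : r ^ (-(1:ℝ)/2) = r ^ (-(3:ℝ)/2) * r := by rw [← rpow_add_one hr.ne']; norm_num
  rw [heightTerm, show -(1:ℝ)/2 - 1 = -(3:ℝ)/2 by norm_num, h]
  field_simp
  ring

lemma integral_heightTerm (hb : 0 < b) (hc : 0 < c) :
    ∫ r in Ioi 0, heightTerm b c r = 4 * √π * √b * exp (-2 * (√b * √c)) := by
  have hcont : ContinuousWithinAt (fun r => r ^ (-(1:ℝ)/2) * expKernel b c r) (Ici 0) 0 := by
    refine continuousWithinAt_Ioi_iff_Ici.1 ?_
    simpa [ContinuousWithinAt, zero_rpow] using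
      tendsto_rpow_mul_expKernel_nhdsGT_zero (b := b) hc (s := -(1:ℝ)/2) (by norm_num)
  have hI := integrableOn_rpow_mul_expKernel hb hc (s := -(1:ℝ)/2) (by norm_num)
  have hftc := integral_Ioi_of_hasDerivAt_of_tendsto hcont
    (fun r hr => hasDerivAt_rpow_neg_one_half_mul_expKernel hr)
    (((integrableOn_heightTerm hb hc).div_const 4).sub (hI.const_mul b))
    (tendsto_rpow_mul_expKernel_atTop hb hc _)
  rw [integral_sub ((integrableOn_heightTerm hb hc).div_const 4) (hI.const_mul b), integral_div,
    integral_const_mul, integral_rpow_neg_one_half_mul_expKernel hb hc,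
    zero_rpow (by norm_num), zero_mul, sub_zero] at hftc
  linear_combination 4 * hftc + 4 * √π * exp (-2 * (√b * √c)) * div_sqrt (x := b)

lemma integral_norm_heightTerm_le (hb : 0 < b) (hc : 0 < c) :
    ∫ r in Ioi 0, ‖heightTerm b c r‖ ≤ 4 * √π * (√b + 1 / √c) * exp (-2 * (√b * √c)) := by
  have hJ := integrableOn_rpow_mul_expKernel hb hc (s := -(3:ℝ)/2) (by norm_num)
  have hbound : ∀ r ∈ Ioi (0:ℝ),
      ‖heightTerm b c r‖ ≤ heightTerm b c r + 4 * (r ^ (-(3:ℝ)/2) * expKernel b c r) := by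
    intro r (hr : 0 < r)
    have hpos := rpow_mul_expKernel_pos (b := b) (c := c) (-(3:ℝ)/2) hr
    have hcr : 0 < c / r := div_pos hc hr
    rw [heightTerm, norm_eq_abs, mul_assoc, abs_mul, abs_of_pos hpos]
    calc |2 * (2 * (c / r) - 1)| * (r ^ (-(3:ℝ)/2) * expKernel b c r)
        ≤ (2 * (2 * (c / r) - 1) + 4) * (r ^ (-(3:ℝ)/2) * expKernel b c r) := by
          gcongr; exact abs_le.2 ⟨by linarith, by linarith⟩
      _ = _ := by ring
  calc ∫ r in Ioi 0, ‖heightTerm b c r‖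
      ≤ ∫ r in Ioi 0, (heightTerm b c r + 4 * (r ^ (-(3:ℝ)/2) * expKernel b c r)) :=
        setIntegral_mono_on (integrableOn_heightTerm hb hc).norm
          ((integrableOn_heightTerm hb hc).add (hJ.const_mul 4)) measurableSet_Ioi hbound
    _ = 4 * √π * (√b + 1 / √c) * exp (-2 * (√b * √c)) := by
        rw [integral_add (integrableOn_heightTerm hb hc) (hJ.const_mul 4), integral_const_mul,
          integral_heightTerm hb hc, integral_rpow_neg_three_half_mul_expKernel hb hc]
        ring
end

lemma exp_mul_rpow_mul_brownianTreeHeightTail_eq_tsum {lam z r : ℝ} (hr : 0 < r) :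
    exp (-lam * r) * r ^ (-(3:ℝ)/2) * brownianTreeHeightTail (z / √r)
      = ∑' n : ℕ, heightTerm lam ((((n:ℝ) + 1) * z) ^ 2) r := by
  rw [brownianTreeHeightTail, mul_left_comm, ← tsum_mul_left, ← tsum_mul_left]
  congr 1 with n
  rw [heightTerm, expKernel, div_pow, sq_sqrt hr.le, neg_add, exp_add]
  ring_nf

lemma summable_integral_norm_heightTerm {b z : ℝ} (hb : 0 < b) (hz : 0 < z) :
    Summable fun n : ℕ => ∫ r in Ioi 0, ‖heightTerm b ((((n:ℝ) + 1) * z) ^ 2) r‖ := by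
  set q := exp (-2 * (√b * z))
  have hq : q < 1 := exp_lt_one_iff.2 (by have := sqrt_pos.2 hb; nlinarith)
  refine Summable.of_nonneg_of_le (fun n => integral_nonneg fun r => norm_nonneg _) (fun n => ?_)
    (((summable_geometric_of_lt_one (exp_pos _).le hq).mul_left
      (4 * √π * (√b + 1 / z) * q)))
  have hn : z ≤ ((n:ℝ) + 1) * z := by nlinarith [n.cast_nonneg (α := ℝ)]
  calc ∫ r in Ioi 0, ‖heightTerm b ((((n:ℝ) + 1) * z) ^ 2) r‖
      ≤ 4 * √π * (√b + 1 / (((n:ℝ) + 1) * z)) * exp (-2 * (√b * (((n:ℝ) + 1) * z))) := by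
        simpa [sqrt_sq (by positivity : 0 ≤ ((n:ℝ) + 1) * z)] using
          integral_norm_heightTerm_le hb (by positivity : 0 < (((n:ℝ) + 1) * z) ^ 2)
    _ = 4 * √π * (√b + 1 / (((n:ℝ) + 1) * z)) * (q * q ^ n) := by
        rw [← pow_succ', ← exp_nat_mul]; push_cast; ring_nf
    _ ≤ 4 * √π * (√b + 1 / z) * q * q ^ n := by
        rw [mul_assoc _ q]; gcongr

lemma hasSum_coth_sub_one {y : ℝ} (hy : 0 < y) :
    HasSum (fun n : ℕ => 2 * exp (-2 * ((n + 1) * y))) (cosh y / sinh y - 1) := by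
  have hu : exp (-y) < 1 := exp_lt_one_iff.2 (by linarith)
  have hu0 : 0 < exp (-y) := exp_pos _
  have hterm : ∀ n : ℕ, 2 * exp (-2 * ((n + 1) * y)) = 2 * exp (-y) ^ 2 * (exp (-y) ^ 2) ^ n :=
    fun n => by
      rw [mul_assoc, ← pow_mul, ← pow_add, ← exp_nat_mul]
      push_cast
      ring_nf
  have hsum : cosh y / sinh y - 1 = 2 * exp (-y) ^ 2 * (1 - exp (-y) ^ 2)⁻¹ := by
    have hu2 : 0 < 1 - exp (-y) ^ 2 := by nlinarith
    rw [cosh_eq, sinh_eq, ← inv_inv (exp y), ← exp_neg]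
    field_simp
    ring
  rw [funext hterm, hsum]
  exact (hasSum_geometric_of_lt_one (sq_nonneg _) (by nlinarith)).mul_left _

/-- Laplace-transform formula for the law of the height of the Brownian tree: for
`λ, z > 0`, `(1/(2√π)) ∫₀^∞ e^{-λr} r^{-3/2} H(z/√r) dr = √λ coth(z√λ) - √λ`. -/
theorem laplace_height (lam z : ℝ) (hlam : 0 < lam) (hz : 0 < z) :
    (1 / (2 * Real.sqrt Real.pi)) *
      ∫ r in Set.Ioi (0 : ℝ),
        Real.exp (-lam * r) * r ^ (-(3 : ℝ) / 2) * brownianTreeHeightTail (z / Real.sqrt r)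
      = Real.sqrt lam *
          (Real.cosh (z * Real.sqrt lam) / Real.sinh (z * Real.sqrt lam))
        - Real.sqrt lam := by
  have hterm : ∀ n : ℕ, ∫ r in Ioi 0, heightTerm lam ((((n:ℝ) + 1) * z) ^ 2) r
      = 2 * √π * √lam * (2 * exp (-2 * ((n + 1) * (z * √lam)))) := fun n => by
    rw [integral_heightTerm hlam (by positivity), sqrt_sq (by positivity)]
    ring_nf
  have hseries := hasSum_integral_of_summable_integral_norm
    (fun n => integrableOn_heightTerm hlam (by positivity))
    (summable_integral_norm_heightTerm hlam hz)
  have hvalue : HasSum (fun n : ℕ => ∫ r in Ioi 0, heightTerm lam ((((n:ℝ) + 1) * z) ^ 2) r)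
      (2 * √π * √lam * (cosh (z * √lam) / sinh (z * √lam) - 1)) := by
    rw [funext hterm]
    exact (hasSum_coth_sub_one (mul_pos hz (sqrt_pos.2 hlam))).mul_left _
  rw [setIntegral_congr_fun measurableSet_Ioi fun r hr =>
      exp_mul_rpow_mul_brownianTreeHeightTail_eq_tsum hr, hseries.unique hvalue]
  field_simp
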